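/- Let V be 3-dimensional over K with basis (x₁,x₂,x₃), and for a scalar t define the bracket [x₁,x₂]_t = a₁t x₁ + (2 − a₂t) x₂, [x₁,x₃]_t = a₃t x₁ + a₄t x₂ + (−2 + a₂t) x₃, [x₂,x₃]_t = (1 − (a₂/2)t) x₁. Then the Jacobiator [x₁,[x₂,x₃]_t]_t + [x₃,[x₁,x₂]_t]_t + [x₂,[x₃,x₁]_t]_t equals (2a₃t − (a₂a₃ + a₁a₄)t²) x₂ + (2a₁t − a₁a₂t²) x₃; in particular this bracket satisfies the classical Jacobi identity for all t if and only if a₁ = 0 and a₃ = 0 (given the a_i range over a field of characteristic 0 and t is a free variable). -/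
import Mathlib


open Polynomial

/-- The deformed sl₂-type bracket on `Fin 3 → K[t]` with respect to the basis
`(x₁, x₂, x₃)`: `[x₁,x₂]_t = a₁t x₁ + (2 - a₂t) x₂`,
`[x₁,x₃]_t = a₃t x₁ + a₄t x₂ + (-2 + a₂t) x₃`, `[x₂,x₃]_t = (1 - (a₂/2)t) x₁`,
extended bilinearly and skew-symmetrically. -/
noncomputable def defBracket {K : Type*} [Field K] (a₁ a₂ a₃ a₄ : K)
    (u v : Fin 3 → Polynomial K) : Fin 3 → Polynomial K :=
  ![(u 0 * v 1 - u 1 * v 0) * (C a₁ * X)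
      + (u 0 * v 2 - u 2 * v 0) * (C a₃ * X)
      + (u 1 * v 2 - u 2 * v 1) * (1 - C (a₂ / 2) * X),
    (u 0 * v 1 - u 1 * v 0) * (2 - C a₂ * X)
      + (u 0 * v 2 - u 2 * v 0) * (C a₄ * X),
    (u 0 * v 2 - u 2 * v 0) * (-2 + C a₂ * X)]

/-- The Jacobiator of the basis vectors of the deformed bracket equals
`(2a₃t - (a₂a₃ + a₁a₄)t²) x₂ + (2a₁t - a₁a₂t²) x₃`; in particular the bracket
satisfies the classical Jacobi identity for all `t` iff `a₁ = 0` and `a₃ = 0`. -/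
theorem defBracket_jacobiator
    {K : Type*} [Field K] [CharZero K] (a₁ a₂ a₃ a₄ : K) :
    (defBracket a₁ a₂ a₃ a₄ ![1, 0, 0]
        (defBracket a₁ a₂ a₃ a₄ ![0, 1, 0] ![0, 0, 1])
      + defBracket a₁ a₂ a₃ a₄ ![0, 0, 1]
          (defBracket a₁ a₂ a₃ a₄ ![1, 0, 0] ![0, 1, 0])
      + defBracket a₁ a₂ a₃ a₄ ![0, 1, 0]
          (defBracket a₁ a₂ a₃ a₄ ![0, 0, 1] ![1, 0, 0]))
      = ![0,
          2 * C a₃ * X - (C a₂ * C a₃ + C a₁ * C a₄) * X ^ 2,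
          2 * C a₁ * X - C a₁ * C a₂ * X ^ 2]
    ∧ ((∀ u v w : Fin 3 → Polynomial K,
          defBracket a₁ a₂ a₃ a₄ u (defBracket a₁ a₂ a₃ a₄ v w)
            + defBracket a₁ a₂ a₃ a₄ w (defBracket a₁ a₂ a₃ a₄ u v)
            + defBracket a₁ a₂ a₃ a₄ v (defBracket a₁ a₂ a₃ a₄ w u) = 0)
        ↔ (a₁ = 0 ∧ a₃ = 0)) := by

  have key : (defBracket a₁ a₂ a₃ a₄ ![1, 0, 0]
        (defBracket a₁ a₂ a₃ a₄ ![0, 1, 0] ![0, 0, 1])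
      + defBracket a₁ a₂ a₃ a₄ ![0, 0, 1]
          (defBracket a₁ a₂ a₃ a₄ ![1, 0, 0] ![0, 1, 0])
      + defBracket a₁ a₂ a₃ a₄ ![0, 1, 0]
          (defBracket a₁ a₂ a₃ a₄ ![0, 0, 1] ![1, 0, 0]))
      = ![0,
          2 * C a₃ * X - (C a₂ * C a₃ + C a₁ * C a₄) * X ^ 2,
          2 * C a₁ * X - C a₁ * C a₂ * X ^ 2] := by
    funext i
    fin_cases i <;>
      simp [defBracket, Pi.add_apply] <;> ring
  refine ⟨key, ?_, ?_⟩
  · intro h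
    have h0 := h ![1, 0, 0] ![0, 1, 0] ![0, 0, 1]
    rw [key] at h0
    have h1 : (2 * C a₃ * X - (C a₂ * C a₃ + C a₁ * C a₄) * X ^ 2 : Polynomial K) = 0 := by
      have := congrFun h0 1; simpa using this
    have h2 : (2 * C a₁ * X - C a₁ * C a₂ * X ^ 2 : Polynomial K) = 0 := by
      have := congrFun h0 2; simpa using this
    have h1' : (C (2 * a₃) * X + C (-(a₂ * a₃ + a₁ * a₄)) * X ^ 2 : Polynomial K) = 0 := by
      rw [← h1]; simp only [C_mul, C_neg, C_add, map_ofNat]; ring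
    have h2' : (C (2 * a₁) * X + C (-(a₁ * a₂)) * X ^ 2 : Polynomial K) = 0 := by
      rw [← h2]; simp only [C_mul, C_neg, map_ofNat]; ring
    have c1 := congrArg (fun p => Polynomial.coeff p 1) h1'
    have c2 := congrArg (fun p => Polynomial.coeff p 1) h2'
    simp only [coeff_add, coeff_C_mul, coeff_X, coeff_X_pow, coeff_zero] at c1 c2
    norm_num at c1 c2
    exact ⟨c2, c1⟩
  · rintro ⟨rfl, rfl⟩ u v w
    funext i
    fin_cases i <;>
      simp [defBracket, Pi.add_apply] <;> ring
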